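/- Let A ∈ ℂ^{M×N} with N = d^n and rank(A) ≤ p, and let Ω = Ω^{(1)} ⊙ ⋯ ⊙ Ω^{(n)} be a Khatri–Rao product of independent matrices Ω^{(j)} ∈ ℂ^{d×p} with i.i.d. standard complex Gaussian entries. Then with probability one, rank(AΩ) = rank(A), and hence the randomized QB approximation with test matrix Ω recovers A exactly. -/

import Mathlib

/-!
Let `r = rank A` and let `U` consist of `r` linearly independent columns of `A`. Then
`rank (A Ω) ≥ r` as soon as the `r × r` matrix formed by the first `r` columns of `Uᴴ A Ω` is
invertible. Its determinant is a polynomial in the real and imaginary parts of the entries of the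
factors `Ω⁽ʲ⁾`, and this polynomial is not identically zero: for suitable `0/1` factors those `r`
columns of `Ω` are the standard basis vectors picking out `U`, and the determinant becomes the Gram
determinant `det (Uᴴ U) ≠ 0`. By Fubini and induction on the number of variables, the zero set of
such a polynomial is null for any product of atomless measures, in particular for the Gaussian law
of the entries. Finally, `rank (A Ω) = rank A` forces `range (A Ω) = range A`, and then
`Q Qᴴ A = A` for every orthonormal basis `Q` of that range.
-/

open Matrix MeasureTheory ProbabilityTheory

/-- The Khatri–Rao product of `n` matrices `W j ∈ ℂ^{d×p}`. -/
def krProd {n d p : ℕ} (W : Fin n → Matrix (Fin d) (Fin p) ℂ) :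
    Matrix (Fin n → Fin d) (Fin p) ℂ :=
  Matrix.of fun idx k => ∏ j, W j (idx j) k

namespace MvPolynomial

lemma measurable_eval_ofReal {ι : Type*} [Fintype ι] (q : MvPolynomial ι ℂ) :
    Measurable fun x : ι → ℝ => eval (fun i => (x i : ℂ)) q :=
  (continuous_eval q).measurable.comp (by fun_prop)

lemma measure_pi_fin_setOf_eval_ofReal_eq_zero {k : ℕ} (μ : Fin k → Measure ℝ)
    [∀ i, SigmaFinite (μ i)] [∀ i, NullSingletonClass (μ i)]
    {q : MvPolynomial (Fin k) ℂ} {x₀ : Fin k → ℝ}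
    (h : eval (fun i => (x₀ i : ℂ)) q ≠ 0) :
    Measure.pi μ {x | eval (fun i => (x i : ℂ)) q = 0} = 0 := by
  induction k with
  | zero =>
    convert measure_empty (μ := Measure.pi μ)
    exact Set.eq_empty_of_forall_notMem fun x hx => h (by rwa [Subsingleton.elim x₀ x])
  | succ k ih =>
    set F := finSuccEquiv ℂ k q
    have eval_cons : ∀ (a : ℝ) (s : Fin k → ℝ),
        eval (fun i => ((Fin.cons a s : Fin (k + 1) → ℝ) i : ℂ)) q
          = eval (fun i => (s i : ℂ)) (F.eval (C (a : ℂ))) := by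
      intro a s
      have : (fun i => ((Fin.cons a s : Fin (k + 1) → ℝ) i : ℂ))
          = Fin.cons (a : ℂ) (fun i => (s i : ℂ)) := by
        funext i; refine Fin.cases ?_ (fun _ => ?_) i <;> simp
      rw [this, eval_eq_eval_mv_eval', Polynomial.eval_map, ← Polynomial.eval₂_at_apply, eval_C]
    have hpres := (measurePreserving_piFinSuccAbove μ 0).symm
    have hS : MeasurableSet {x : Fin (k + 1) → ℝ | eval (fun i => (x i : ℂ)) q = 0} :=
      measurable_eval_ofReal q (measurableSet_singleton 0)
    rw [← hpres.measure_preimage_equiv, Measure.measure_prod_null (hpres.measurable hS)]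
    -- By Fubini it suffices that for a.e. first coordinate `a` the slice `q (a, ·)` has a null
    -- zero set; by induction this holds unless `a` is one of the finitely many real roots of
    -- `P = q (·, Fin.tail x₀)`.
    set P : Polynomial ℂ := F.map (eval fun i => (Fin.tail x₀ i : ℂ))
    have eval_P : ∀ a : ℝ, P.eval (a : ℂ)
        = eval (fun i => (Fin.tail x₀ i : ℂ)) (F.eval (C (a : ℂ))) := by
      intro a
      rw [← Polynomial.eval_map_apply, eval_C]
    have hP : P ≠ 0 := by
      refine fun hP => h ?_
      rw [← Fin.cons_self_tail x₀, eval_cons, ← eval_P, hP, Polynomial.eval_zero]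
    have hroots : ∀ᵐ a ∂μ 0, a ∉ Complex.ofReal ⁻¹' {z | P.IsRoot z} :=
      ((Polynomial.finite_setOfPred_isRoot hP).preimage
        Complex.ofReal_injective.injOn).countable.ae_notMem _
    filter_upwards [hroots] with a ha
    have := ih (fun j => μ (Fin.succAbove 0 j)) (q := F.eval (C (a : ℂ)))
      (x₀ := Fin.tail x₀) (by rw [← eval_P]; exact ha)
    simpa [eval_cons] using this

theorem ae_pi_eval_ofReal_ne_zero {ι : Type*} [Fintype ι] (μ : ι → Measure ℝ)
    [∀ i, SigmaFinite (μ i)] [∀ i, NullSingletonClass (μ i)]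
    {q : MvPolynomial ι ℂ} {x₀ : ι → ℝ} (h : eval (fun i => (x₀ i : ℂ)) q ≠ 0) :
    ∀ᵐ x ∂Measure.pi μ, eval (fun i => (x i : ℂ)) q ≠ 0 := by
  let e := (Fintype.equivFin ι).symm
  have hpres := measurePreserving_piCongrLeft μ e
  rw [ae_iff, ← hpres.measure_preimage_equiv]
  convert measure_pi_fin_setOf_eval_ofReal_eq_zero (fun i => μ (e i))
    (q := rename e.symm q) (x₀ := x₀ ∘ e) ?_ using 2
  · ext y
    simp [eval_rename, Function.comp_def, MeasurableEquiv.coe_piCongrLeft,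
      Equiv.piCongrLeft_apply_eq_cast]
  · simpa [eval_rename, Function.comp_def] using h

end MvPolynomial

lemma Matrix.exists_linearIndependent_col_comp {m n K : Type*} [Field K] [Finite m] [Fintype n]
    (A : Matrix m n K) : ∃ c : Fin A.rank → n, LinearIndependent K (A.col ∘ c) := by
  obtain ⟨κ, a, -, hspan, hli⟩ := exists_linearIndependent' K A.col
  have : Fintype κ := @Fintype.ofFinite _ hli.finite
  have hcard : Fintype.card κ = A.rank := by
    rw [rank_eq_finrank_span_cols, ← hspan, finrank_span_eq_card hli]
  let e := Fintype.equivFinOfCardEq hcard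
  exact ⟨a ∘ e.symm, hli.comp e.symm e.symm.injective⟩

lemma Matrix.det_conjTranspose_mul_self_ne_zero {m r 𝕜 : Type*} [RCLike 𝕜] [Fintype m]
    [Fintype r] [DecidableEq r] {U : Matrix m r 𝕜} (hU : LinearIndependent 𝕜 U.col) :
    (Uᴴ * U).det ≠ 0 := by
  open scoped ComplexOrder in
  exact (PosDef.conjTranspose_mul_self U (mulVec_injective_iff.mpr hU)).det_pos.ne'

lemma Matrix.card_le_rank_of_det_mul_submatrix_ne_zero {m n r K : Type*} [Field K] [Fintype m]
    [Fintype n] [Fintype r] [DecidableEq r] (V : Matrix r m K) (B : Matrix m n K) (γ : r → n)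
    (h : ((V * B).submatrix id γ).det ≠ 0) : Fintype.card r ≤ B.rank :=
  calc Fintype.card r = ((V * B).submatrix id γ).rank := (rank_of_det_ne_zero h).symm
    _ ≤ (V * B).rank := rank_submatrix_le _ _ _
    _ ≤ B.rank := rank_mul_le_right _ _

lemma Matrix.range_mulVecLin_mul_eq_of_rank_eq {m n o K : Type*} [Field K] [Fintype n] [Fintype o]
    {A : Matrix m n K} {B : Matrix n o K} (h : (A * B).rank = A.rank) :
    LinearMap.range (A * B).mulVecLin = LinearMap.range A.mulVecLin := by
  refine Submodule.eq_of_le_of_finrank_eq ?_ h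
  rw [mulVecLin_mul]
  exact LinearMap.range_comp_le_range _ _

lemma Matrix.mul_conjTranspose_mul_eq_self {m n k R : Type*} [Fintype m] [Fintype n] [Fintype k]
    [DecidableEq k] [CommSemiring R] [Star R] {Q : Matrix m k R} {A : Matrix m n R}
    (hQ : Qᴴ * Q = 1) (hA : LinearMap.range A.mulVecLin ≤ LinearMap.range Q.mulVecLin) :
    Q * (Qᴴ * A) = A := by
  refine ext_iff_mulVec.mpr fun v => ?_
  obtain ⟨y, hy⟩ := hA ⟨v, rfl⟩
  simp only [mulVecLin_apply] at hy
  calc (Q * (Qᴴ * A)) *ᵥ v = Q *ᵥ Qᴴ *ᵥ A *ᵥ v := by simp only [mulVec_mulVec]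
    _ = (Q * (Qᴴ * Q)) *ᵥ y := by rw [← hy, mulVec_mulVec, mulVec_mulVec, Matrix.mul_assoc]
    _ = A *ᵥ v := by rw [hQ, Matrix.mul_one, hy]

section KhatriRao

variable {n d p : ℕ}

def reImParts (W : Fin n → Matrix (Fin d) (Fin p) ℂ) : Fin n × Fin d × Fin p × Bool → ℝ
  | (j, a, b, true) => (W j a b).re
  | (j, a, b, false) => (W j a b).im

open MvPolynomial in
noncomputable def krProdPoly (n d p : ℕ) :
    Matrix (Fin n → Fin d) (Fin p) (MvPolynomial (Fin n × Fin d × Fin p × Bool) ℂ) :=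
  of fun idx k => ∏ j, (X (j, idx j, k, true) + X (j, idx j, k, false) * C Complex.I)

lemma krProdPoly_map_eval_reImParts (W : Fin n → Matrix (Fin d) (Fin p) ℂ) :
    (krProdPoly n d p).map (MvPolynomial.eval fun i => (reImParts W i : ℂ)) = krProd W := by
  ext idx k
  simp [krProdPoly, krProd, reImParts, Complex.re_add_im]

noncomputable def selectionFactors {r : ℕ} (γ : Fin r → Fin p) (c : Fin r → Fin n → Fin d) :
    Fin n → Matrix (Fin d) (Fin p) ℂ :=
  fun j => of fun a => Function.extend γ (fun k => if a = c k j then 1 else 0) 0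

lemma krProd_selectionFactors_submatrix {r : ℕ} {γ : Fin r → Fin p}
    (hγ : Function.Injective γ) (c : Fin r → Fin n → Fin d) :
    (krProd (selectionFactors γ c)).submatrix id γ
      = (1 : Matrix (Fin n → Fin d) (Fin n → Fin d) ℂ).submatrix id c := by
  ext idx k
  simp [krProd, selectionFactors, hγ.extend_apply, one_apply, Finset.prod_boole, funext_iff]

open MvPolynomial in
lemma exists_mvPolynomial_rank_mul_krProd_eq {m : Type*} [Fintype m]
    (A : Matrix m (Fin n → Fin d) ℂ) (hrank : A.rank ≤ p) :
    ∃ q : MvPolynomial (Fin n × Fin d × Fin p × Bool) ℂ,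
      (∃ W₀, eval (fun i => (reImParts W₀ i : ℂ)) q ≠ 0) ∧
      ∀ W, eval (fun i => (reImParts W i : ℂ)) q ≠ 0 → (A * krProd W).rank = A.rank := by
  obtain ⟨c, hc⟩ := A.exists_linearIndependent_col_comp
  let U := A.submatrix id c
  let γ := Fin.castLE hrank
  -- without the explicit `σ` the product would elaborate with the `CStarMatrix` multiplication
  let q := (((Uᴴ * A).map (C (σ := Fin n × Fin d × Fin p × Bool)) * krProdPoly n d p).submatrix
    id γ).det
  have eval_q : ∀ W, eval (fun i => (reImParts W i : ℂ)) q
      = ((Uᴴ * (A * krProd W)).submatrix id γ).det := by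
    intro W
    rw [RingHom.map_det, RingHom.mapMatrix_apply, ← submatrix_map, Matrix.map_mul,
      krProdPoly_map_eval_reImParts, Matrix.map_map]
    simp [Function.comp_def, Matrix.mul_assoc]
  refine ⟨q, ⟨selectionFactors γ c, ?_⟩, fun W hW => ?_⟩
  · have hAU : A * (1 : Matrix (Fin n → Fin d) (Fin n → Fin d) ℂ).submatrix id c = U :=
      mul_submatrix_one (Equiv.refl _) c A
    rw [eval_q, submatrix_mul _ _ id id γ Function.bijective_id,
      submatrix_mul _ _ id id γ Function.bijective_id, submatrix_id_id, submatrix_id_id,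
      krProd_selectionFactors_submatrix (Fin.castLE_injective hrank), hAU]
    exact det_conjTranspose_mul_self_ne_zero hc
  · refine le_antisymm (rank_mul_le_left _ _) ?_
    simpa using card_le_rank_of_det_mul_submatrix_ne_zero Uᴴ (A * krProd W) γ (by rwa [← eval_q])

end KhatriRao

/-- If `rank A ≤ p` and `Ω = Ω⁽¹⁾ ⊙ ⋯ ⊙ Ω⁽ⁿ⁾` is a Khatri–Rao product of random
matrices all of whose entries have independent standard complex Gaussian entries
(real and imaginary parts independent `N(0, 1/2)`), then almost surely
`rank (A*Ω) = rank A`, and hence the randomized QB approximation recovers `A`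
exactly. -/
theorem stmt5 {Ωsp : Type*} [MeasurableSpace Ωsp] (μ : Measure Ωsp) [IsProbabilityMeasure μ]
    (n d p M : ℕ) (A : Matrix (Fin M) (Fin n → Fin d) ℂ) (hrank : A.rank ≤ p)
    (W : Fin n → Ωsp → Matrix (Fin d) (Fin p) ℂ)
    (g : Fin n × Fin d × Fin p × Bool → Ωsp → ℝ)
    (hg : ∀ j a b ω, g (j, a, b, true) ω = (W j ω a b).re ∧
      g (j, a, b, false) ω = (W j ω a b).im)
    (hmeas : ∀ i, Measurable (g i))
    (hindep : iIndepFun g μ)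
    (hdist : ∀ i, μ.map (g i) = gaussianReal 0 (1/2 : NNReal)) :
    ∀ᵐ ω ∂μ,
      (A * krProd (fun j => W j ω)).rank = A.rank ∧
      ∀ (k : ℕ) (Q : Matrix (Fin M) (Fin k) ℂ), Qᴴ * Q = 1 →
        LinearMap.range Q.mulVecLin =
          LinearMap.range (A * krProd (fun j => W j ω)).mulVecLin →
        Q * (Qᴴ * A) = A := by
  have hlaw : μ.map (fun ω i => g i ω) = Measure.pi fun _ => gaussianReal 0 (1/2 : NNReal) := by
    rw [hindep.map_fun_eq_pi_map fun i => (hmeas i).aemeasurable]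
    simp_rw [hdist]
  have : NullSingletonClass (gaussianReal 0 (1/2 : NNReal)) :=
    nullSingletonClass_gaussianReal (by norm_num)
  have hparts : ∀ ω i, g i ω = reImParts (fun j => W j ω) i := by
    rintro ω ⟨j, a, b, _ | _⟩ <;> simp [reImParts, hg]
  obtain ⟨q, ⟨W₀, hW₀⟩, hq⟩ := exists_mvPolynomial_rank_mul_krProd_eq A hrank
  have hq_ae : ∀ᵐ ω ∂μ, MvPolynomial.eval (fun i => (g i ω : ℂ)) q ≠ 0 :=
    ae_of_ae_map (aemeasurable_pi_lambda _ fun i => (hmeas i).aemeasurable)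
      (hlaw ▸ MvPolynomial.ae_pi_eval_ofReal_ne_zero _ hW₀)
  filter_upwards [hq_ae] with ω hω
  have hrank_eq := hq _ (by simpa only [hparts] using hω)
  refine ⟨hrank_eq, fun k Q hQ hrange => mul_conjTranspose_mul_eq_self hQ ?_⟩
  rw [hrange, range_mulVecLin_mul_eq_of_rank_eq hrank_eq]
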